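/- arXiv:2206.13253 — 3 statements merged into one kernel-verified Lean document; each statement's English description precedes it below -/
import Mathlib

section
/- For every n ≥ 3 there exists a function Ã assigning a point of ℂ to every n-element subset S of ℂ whose points all lie on a common circle c with center O and radius r > 0 and which contains no rotationally symmetric subset (i.e. no subset Q ⊆ S with at least two elements is mapped onto itself by a nontrivial rotation about O), such that: (1) Ã(S) lies on the circle c; and (2) Ã(f(S)) = f(Ã(S)) for every similarity f of the plane. -/
/-!
Translate `S` so that its centre `O` becomes `0`, and let `e_k` be the elementary symmetric
functions of the translated points. The map `z ↦ a * σ z`, with `σ` the identity or complex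
conjugation, sends `e_k` to `a ^ k * σ e_k`. If the indices `k` with `e_k ≠ 0` have gcd `1`, then a
Bézout combination `D = ∏ e_k ^ c_k` is sent to `a * σ D`, so `O + r * D / |D|` commutes with every
similarity `z ↦ a * σ z + b`. The gcd is `1`: if it were `d > 1`, multiplying by a primitive `d`-th
root of unity `ζ` would fix every `e_k`, hence the polynomial `∏ (X - z)`, hence `S`, and `S`
would be symmetric under the rotation by `ζ` about `O`. Since three points determine the circle,
the construction depends on `S` alone.
-/

noncomputable section

/-- A similarity of the plane: a bijection multiplying all distances by a fixed
positive ratio. -/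
def IsSimilarity (f : ℂ → ℂ) : Prop :=
  Function.Bijective f ∧ ∃ r : ℝ, 0 < r ∧
    ∀ z w : ℂ, ‖f z - f w‖ = r * ‖z - w‖

open Polynomial

lemma zpow_sum₀ {G₀ ι : Type*} [CommGroupWithZero G₀] {a : G₀} (ha : a ≠ 0) (s : Finset ι)
    (f : ι → ℤ) : a ^ (∑ i ∈ s, f i) = ∏ i ∈ s, a ^ f i := by
  classical
  induction s using Finset.induction_on with
  | empty => simp
  | insert i s hi ih => rw [Finset.sum_insert hi, Finset.prod_insert hi, zpow_add₀ ha, ih]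

namespace Multiset

variable {K : Type*} [Field K]

lemma esymm_map_mul_map {F : Type*} [FunLike F K K] [RingHomClass F K K] (a : K) (σ : F)
    (m : Multiset K) (k : ℕ) :
    (m.map fun z => a * σ z).esymm k = a ^ k * σ (m.esymm k) := by
  have hσ : (m.map σ).esymm k = σ (m.esymm k) := by
    simp only [esymm, powersetCard_map, map_map, Function.comp_def, map_multiset_sum,
      map_multiset_prod]
  rw [← hσ, ← smul_eq_mul, pow_smul_esymm, map_map]
  rfl

lemma eq_of_card_eq_of_esymm_eq {s t : Multiset K} (hcard : card s = card t)
    (h : ∀ k ≤ card s, s.esymm k = t.esymm k) : s = t := by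
  have hpoly : (s.map fun a => X - C a).prod = (t.map fun a => X - C a).prod := by
    ext k
    rcases le_or_gt k (card s) with hk | hk
    · rw [prod_X_sub_C_coeff s hk, prod_X_sub_C_coeff t (hcard ▸ hk), ← hcard,
        h _ (Nat.sub_le _ _)]
    · rw [coeff_eq_zero_of_natDegree_lt, coeff_eq_zero_of_natDegree_lt] <;>
        simpa [natDegree_multiset_prod_X_sub_C_eq_card, ← hcard]
  simpa using congrArg roots hpoly

open scoped Classical in
def esymmSupport (m : Multiset K) : Finset ℕ :=
  (Finset.range (card m + 1)).filter fun k => m.esymm k ≠ 0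

def esymmGcd (m : Multiset K) : ℤ := m.esymmSupport.gcd (↑)

lemma mem_esymmSupport {m : Multiset K} {k : ℕ} :
    k ∈ m.esymmSupport ↔ k ≤ card m ∧ m.esymm k ≠ 0 := by
  simp [esymmSupport]

lemma esymmSupport_map_mul_map {F : Type*} [FunLike F K K] [RingHomClass F K K] {a : K}
    (ha : a ≠ 0) (σ : F) (m : Multiset K) :
    (m.map fun z => a * σ z).esymmSupport = m.esymmSupport := by
  ext k
  simp [mem_esymmSupport, esymm_map_mul_map, ha]

lemma card_mem_esymmSupport {m : Multiset K} (h0 : (0 : K) ∉ m) : card m ∈ m.esymmSupport := by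
  refine mem_esymmSupport.2 ⟨le_rfl, ?_⟩
  simpa [esymm, powersetCard_self] using prod_ne_zero h0

lemma map_mul_eq_self_of_pow_eq_one (m : Multiset K) {u : K}
    (h : ∀ k ∈ m.esymmSupport, u ^ k = 1) : m.map (u * ·) = m := by
  refine eq_of_card_eq_of_esymm_eq (card_map _ _) fun k hk => ?_
  have := esymm_map_mul_map u (RingHom.id K) m k
  simp only [RingHom.id_apply] at this
  rw [this]
  by_cases hk0 : m.esymm k = 0
  · simp [hk0]
  · rw [h k (mem_esymmSupport.2 ⟨by simpa using hk, hk0⟩), one_mul]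

def bezoutCoeff (s : Finset ℕ) : ℕ → ℤ := (s.gcd_eq_sum_mul (↑)).choose

lemma gcd_eq_sum_mul_bezoutCoeff (s : Finset ℕ) :
    s.gcd (↑) = ∑ k ∈ s, (k : ℤ) * bezoutCoeff s k :=
  (s.gcd_eq_sum_mul _).choose_spec

def esymmDirection (m : Multiset K) : K :=
  ∏ k ∈ m.esymmSupport, m.esymm k ^ bezoutCoeff m.esymmSupport k

lemma esymmDirection_ne_zero (m : Multiset K) : m.esymmDirection ≠ 0 :=
  Finset.prod_ne_zero_iff.2 fun _ hk => zpow_ne_zero _ (mem_esymmSupport.1 hk).2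

lemma esymmDirection_map_mul_map {F : Type*} [FunLike F K K] [RingHomClass F K K] {a : K}
    (ha : a ≠ 0) (σ : F) (m : Multiset K) :
    (m.map fun z => a * σ z).esymmDirection = a ^ m.esymmGcd * σ m.esymmDirection := by
  simp only [esymmDirection, esymmSupport_map_mul_map ha, esymm_map_mul_map, esymmGcd,
    gcd_eq_sum_mul_bezoutCoeff, mul_zpow, Finset.prod_mul_distrib, map_prod, map_zpow₀,
    zpow_sum₀ ha, zpow_mul, zpow_natCast]

end Multiset

open Complex ComplexConjugate

lemma Multiset.esymmGcd_eq_one {m : Multiset ℂ} (hm : m ≠ 0) (h0 : (0 : ℂ) ∉ m)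
    (hfree : ∀ u : ℂ, ‖u‖ = 1 → u ≠ 1 → m.map (u * ·) ≠ m) : m.esymmGcd = 1 := by
  obtain ⟨d, hd⟩ : ∃ d : ℕ, m.esymmGcd = d :=
    Int.eq_ofNat_of_zero_le (Int.nonneg_of_normalize_eq_self Finset.normalize_gcd)
  have hdvd : ∀ k ∈ m.esymmSupport, d ∣ k := fun k hk =>
    Int.natCast_dvd_natCast.1 (hd ▸ Finset.gcd_dvd hk)
  have hd0 : d ≠ 0 := by
    rintro rfl
    have := hdvd _ (card_mem_esymmSupport h0)
    rw [zero_dvd_iff, card_eq_zero] at this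
    exact hm this
  rw [hd, Nat.cast_eq_one]
  by_contra hne
  have hζ := Complex.isPrimitiveRoot_exp d hd0
  refine hfree _ (hζ.norm'_eq_one hd0) (hζ.ne_one (by omega))
    (map_mul_eq_self_of_pow_eq_one m fun k hk => ?_)
  obtain ⟨j, rfl⟩ := hdvd k hk
  rw [pow_mul, hζ.pow_eq_one, one_pow]

namespace Complex

lemma algEquiv_apply_ofReal (σ : ℂ ≃ₐ[ℝ] ℂ) (x : ℝ) : σ x = x :=
  σ.toAlgHom.map_coe_real_complex x

lemma norm_algEquiv_apply (σ : ℂ ≃ₐ[ℝ] ℂ) (z : ℂ) : ‖σ z‖ = ‖z‖ := by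
  rcases real_algHom_eq_id_or_conj σ.toAlgHom with h | h
  · rw [show σ z = z from DFunLike.congr_fun h z]
  · rw [show σ z = conj z from DFunLike.congr_fun h z, norm_conj]

end Complex

lemma IsSimilarity.exists_eq_mul_algEquiv_add {f : ℂ → ℂ} (hf : IsSimilarity f) :
    ∃ a : ℂ, a ≠ 0 ∧ ∃ (σ : ℂ ≃ₐ[ℝ] ℂ) (b : ℂ), f = fun z => a * σ z + b := by
  obtain ⟨hbij, r, hr, hdist⟩ := hf
  have hr' : (r : ℂ) ≠ 0 := by exact_mod_cast hr.ne'
  let g : ℂ ≃ᵢ ℂ :=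
    { Equiv.ofBijective _
        (((Equiv.subRight (f 0)).trans (Equiv.divRight₀ _ hr')).bijective.comp hbij) with
      isometry_toFun := Isometry.of_dist_eq fun z w => by
        simp only [Equiv.toFun_as_coe, Equiv.ofBijective_apply, Function.comp_apply,
          Equiv.trans_apply, Equiv.subRight_apply, Equiv.divRight₀_apply, dist_eq, ← sub_div,
          sub_sub_sub_cancel_right, norm_div, hdist, norm_real, Real.norm_of_nonneg hr.le]
        field_simp }
  have hg : ∀ z, (f z - f 0) / r = g.toRealLinearIsometryEquivOfMapZero (by simp [g]) z :=
    fun z => rfl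
  obtain ⟨c, hc⟩ := linear_isometry_complex (g.toRealLinearIsometryEquivOfMapZero (by simp [g]))
  refine ⟨r * c, mul_ne_zero hr' (Circle.coe_ne_zero c), ?_⟩
  rcases hc with hc | hc
  · refine ⟨AlgEquiv.refl, f 0, funext fun z => ?_⟩
    have := hg z
    rw [hc, rotation_apply, div_eq_iff hr'] at this
    rw [AlgEquiv.coe_refl, id_eq]
    linear_combination this
  · refine ⟨conjAe, f 0, funext fun z => ?_⟩
    have := hg z
    rw [hc, LinearIsometryEquiv.trans_apply, rotation_apply, div_eq_iff hr'] at this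
    simp only [conjAe_coe, conjLIE_apply] at this ⊢
    linear_combination this

lemma eq_and_eq_of_forall_norm_sub_eq {S : Set ℂ} (h3 : 3 ≤ S.ncard) {O O' : ℂ} {r r' : ℝ}
    (h : ∀ z ∈ S, ‖z - O‖ = r) (h' : ∀ z ∈ S, ‖z - O'‖ = r') : O = O' ∧ r = r' := by
  obtain ⟨T, hTS, hT⟩ := Set.exists_subset_card_eq h3
  obtain ⟨a, b, c, hab, hac, hbc, rfl⟩ := Set.ncard_eq_three.1 hT
  have hmem : ∀ z ∈ ({a, b, c} : Set ℂ), z ∈ (⟨O, r⟩ : EuclideanGeometry.Sphere ℂ) ∧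
      z ∈ (⟨O', r'⟩ : EuclideanGeometry.Sphere ℂ) := fun z hz =>
    ⟨by simp [EuclideanGeometry.mem_sphere, dist_eq, h z (hTS hz)],
      by simp [EuclideanGeometry.mem_sphere, dist_eq, h' z (hTS hz)]⟩
  by_contra hne
  have hs : (⟨O, r⟩ : EuclideanGeometry.Sphere ℂ) ≠ ⟨O', r'⟩ := by
    intro hs
    injection hs with hO hr
    exact hne ⟨hO, hr⟩
  rcases EuclideanGeometry.eq_of_mem_sphere_of_mem_sphere_of_finrank_eq_two
      finrank_real_complex hs hab (hmem a (by simp)).1 (hmem b (by simp)).1 (hmem c (by simp)).1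
      (hmem a (by simp)).2 (hmem b (by simp)).2 (hmem c (by simp)).2 with h | h
  · exact hac h.symm
  · exact hbc h.symm

open scoped Classical in
def centeredMultiset (S : Set ℂ) (O : ℂ) : Multiset ℂ :=
  if h : S.Finite then h.toFinset.val.map (· - O) else 0

section centeredMultiset

variable {S : Set ℂ} (hS : S.Finite) {O : ℂ}
include hS

lemma mem_centeredMultiset {w : ℂ} : w ∈ centeredMultiset S O ↔ w + O ∈ S := by
  simp [centeredMultiset, hS, sub_eq_iff_eq_add]

lemma card_centeredMultiset : Multiset.card (centeredMultiset S O) = S.ncard := by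
  simp [centeredMultiset, hS, Set.ncard_eq_toFinset_card S hS]

lemma centeredMultiset_inj {T : Set ℂ} (hT : T.Finite)
    (h : centeredMultiset S O = centeredMultiset T O) : S = T := by
  ext z
  simpa [mem_centeredMultiset hS, mem_centeredMultiset hT] using congrArg (z - O ∈ ·) h

lemma centeredMultiset_image {f g : ℂ → ℂ} (hg : g.Injective) {O' : ℂ}
    (hfg : ∀ z, f z - O' = g (z - O)) :
    centeredMultiset (f '' S) O' = (centeredMultiset S O).map g := by
  classical
  have hf : f.Injective := fun x y h => sub_left_injective (hg (by rw [← hfg, ← hfg, h]))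
  rw [centeredMultiset, dif_pos (hS.image f), centeredMultiset, dif_pos hS,
    hS.toFinset_image f (hS.image f), Finset.image_val_of_injOn hf.injOn, Multiset.map_map,
    Multiset.map_map]
  exact Multiset.map_congr rfl fun z _ => hfg z

lemma esymmGcd_centeredMultiset (h3 : 3 ≤ S.ncard) (hO : O ∉ S)
    (hsym : ∀ u : ℂ, ‖u‖ = 1 → u ≠ 1 → (fun z => O + u * (z - O)) '' S ≠ S) :
    (centeredMultiset S O).esymmGcd = 1 := by
  refine Multiset.esymmGcd_eq_one ?_ ?_ fun u hu hu1 h => hsym u hu hu1 ?_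
  · rw [← Multiset.card_pos, card_centeredMultiset hS]
    omega
  · rwa [mem_centeredMultiset hS, zero_add]
  · have hu0 : u ≠ 0 := by rintro rfl; simp at hu
    refine centeredMultiset_inj (O := O) (hS.image _) hS ?_
    rwa [centeredMultiset_image hS (mul_right_injective₀ hu0) fun z => add_sub_cancel_left _ _]

end centeredMultiset

def circlePointAt (S : Set ℂ) (O : ℂ) (r : ℝ) : ℂ :=
  O + r * ((centeredMultiset S O).esymmDirection / ‖(centeredMultiset S O).esymmDirection‖)

open scoped Classical in
def circlePoint (S : Set ℂ) : ℂ :=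
  if h : ∃ c : ℂ × ℝ, ∀ z ∈ S, ‖z - c.1‖ = c.2 then circlePointAt S h.choose.1 h.choose.2 else 0

lemma norm_circlePointAt_sub (S : Set ℂ) (O : ℂ) {r : ℝ} (hr : 0 ≤ r) :
    ‖circlePointAt S O r - O‖ = r := by
  have hD := (centeredMultiset S O).esymmDirection_ne_zero
  simp [circlePointAt, hD, abs_of_nonneg hr]

lemma circlePoint_eq {S : Set ℂ} (h3 : 3 ≤ S.ncard) {O : ℂ} {r : ℝ}
    (hS : ∀ z ∈ S, ‖z - O‖ = r) : circlePoint S = circlePointAt S O r := by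
  have h : ∃ c : ℂ × ℝ, ∀ z ∈ S, ‖z - c.1‖ = c.2 := ⟨(O, r), hS⟩
  obtain ⟨rfl, rfl⟩ := eq_and_eq_of_forall_norm_sub_eq h3 h.choose_spec hS
  rw [circlePoint, dif_pos h]

lemma circlePoint_image {S : Set ℂ} (h3 : 3 ≤ S.ncard) {O : ℂ} {r : ℝ}
    (hS : ∀ z ∈ S, ‖z - O‖ = r) (hgcd : (centeredMultiset S O).esymmGcd = 1)
    {a : ℂ} (ha : a ≠ 0) (σ : ℂ ≃ₐ[ℝ] ℂ) (b : ℂ) :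
    circlePoint ((fun z => a * σ z + b) '' S) = a * σ (circlePoint S) + b := by
  have hsub : ∀ z, a * σ z + b - (a * σ O + b) = a * σ (z - O) := fun z => by
    rw [add_sub_add_right_eq_sub, ← mul_sub, ← map_sub]
  have hinj : Function.Injective fun w => a * σ w := fun x y h =>
    σ.injective (mul_left_cancel₀ ha h)
  have h3' : 3 ≤ ((fun z => a * σ z + b) '' S).ncard := by
    rwa [Set.ncard_image_of_injective S fun x y h => hinj (add_right_cancel h)]
  have hS' : ∀ w ∈ (fun z => a * σ z + b) '' S, ‖w - (a * σ O + b)‖ = ‖a‖ * r := by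
    rintro _ ⟨z, hz, rfl⟩
    rw [hsub, norm_mul, norm_algEquiv_apply, hS z hz]
  have himage :=
    centeredMultiset_image (Set.finite_of_ncard_pos (by omega : 0 < S.ncard)) hinj hsub
  have hD := (centeredMultiset S O).esymmDirection_ne_zero
  have ha' : (‖a‖ : ℂ) ≠ 0 := by exact_mod_cast norm_ne_zero_iff.2 ha
  rw [circlePoint_eq h3' hS', circlePoint_eq h3 hS, circlePointAt, circlePointAt, himage,
    Multiset.esymmDirection_map_mul_map ha, hgcd, zpow_one]
  simp only [map_add, map_mul, map_div₀, algEquiv_apply_ofReal, norm_mul, norm_algEquiv_apply]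
  push_cast
  field_simp
  ring

/-- For every `n ≥ 3` there is a function `A` assigning to each `n`-element
subset `S` of ℂ lying on a common circle (center `O`, radius `r`) and
containing no rotationally symmetric subset (no subset with at least two
elements mapped onto itself by a nontrivial rotation about `O`) a point
`A S` on the circle, commuting with similarities. -/
theorem stmt6 (n : ℕ) (hn : 3 ≤ n) :
    ∃ A : Set ℂ → ℂ,
      ∀ (S : Set ℂ) (O : ℂ) (r : ℝ), S.ncard = n → 0 < r →
        (∀ z ∈ S, ‖z - O‖ = r) →
        (¬ ∃ Q : Set ℂ, Q ⊆ S ∧ 2 ≤ Q.ncard ∧ ∃ u : ℂ, ‖u‖ = 1 ∧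
            u ≠ 1 ∧ (fun z => O + u * (z - O)) '' Q = Q) →
        ‖A S - O‖ = r ∧
        (∀ f : ℂ → ℂ, IsSimilarity f → A (f '' S) = f (A S)) := by
  refine ⟨circlePoint, fun S O r hcard hr hS hsym => ?_⟩
  have h3 : 3 ≤ S.ncard := hcard ▸ hn
  have hO : O ∉ S := fun hO => by simpa [hr.ne] using hS O hO
  have hgcd := esymmGcd_centeredMultiset (Set.finite_of_ncard_pos (by omega)) h3 hO
    fun u hu hu1 hrot => hsym ⟨S, subset_rfl, by omega, u, hu, hu1, hrot⟩
  refine ⟨circlePoint_eq h3 hS ▸ norm_circlePointAt_sub S O hr.le, fun f hf => ?_⟩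
  obtain ⟨a, ha, σ, b, rfl⟩ := hf.exists_eq_mul_algEquiv_add
  exact circlePoint_image h3 hS hgcd ha σ b
end
end

section
/- (Existence of the center of rotational asymmetry for multisets.) For every n ≥ 1 there exists an n-multiset center X̃, defined on the family of all n-multisets of points of ℂ, such that for every n-multiset P: X̃(P) equals the centroid of P if and only if Fix(P) consists of exactly one point. -/
/-!
The center is `X̃(P) = c + v(P)`, where `c` is the centroid, `m_k = ∑ (z - c)^k` are the central
moments for `1 ≤ k ≤ n`, and `S = {k | m_k ≠ 0}`. If `gcd S = 1`, choose Bézout coefficients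
`∑_{k ∈ S} k e_k = 1` and put `v(P) = ∏_{k ∈ S} m_k ^ e_k`; otherwise `v(P) = 0`.

A similarity `z ↦ a σ(z) + b` (`σ` the identity or conjugation) multiplies `m_k` by `a^k` after
applying `σ`, so it preserves `S` and, because `∑ k e_k = 1`, sends `v` to `a σ(v)`: hence `X̃` is
equivariant. Equivariant centers are fixed by every symmetry, so `c, X̃(P) ∈ Fix(P)`.
If `gcd S = 1` then `v ≠ 0`, so `Fix(P)` holds two distinct points. If `gcd S = d ≠ 1`, take
`ζ ≠ 1` with `ζ^k = 1` for all `k ∈ S` (a primitive `d`-th root of unity, or `-1` when `S = ∅`):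
the rotation by `ζ` about `c` preserves the power sums `m_1, …, m_n` of `P - c`, hence by Newton's
identities preserves `P`; its only fixed point is `c`, so `Fix(P) = {c}`.
-/

noncomputable section

/-- An isometry of the plane: a similarity with ratio 1. -/
def IsPlaneIsometry (f : ℂ → ℂ) : Prop :=
  Function.Bijective f ∧ ∀ z w : ℂ, ‖f z - f w‖ = ‖z - w‖

/-- The set of points fixed by every symmetry of the multiset `P`. -/
def FixMultiset (P : Multiset ℂ) : Set ℂ :=
  {x | ∀ T : ℂ → ℂ, IsPlaneIsometry T → Multiset.map T P = P → T x = x}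

open Finset

theorem Multiset.mul_esymm_eq_sum {R : Type*} [CommRing R] (s : Multiset R) (k : ℕ) :
    k * s.esymm k = (-1) ^ (k + 1) * ∑ a ∈ HasAntidiagonal.antidiagonal k with a.1 < k,
      (-1) ^ a.1 * s.esymm a.1 * (s.map (· ^ a.2)).sum := by
  classical
  have hs : (univ.val.map fun x : s => (x : R)) = s := s.map_univ_coe
  have hpsum (j : ℕ) : MvPolynomial.aeval (fun x : s => (x : R)) (MvPolynomial.psum s R j) =
      (s.map (· ^ j)).sum := by
    simp only [MvPolynomial.psum, map_sum, map_pow, MvPolynomial.aeval_X]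
    rw [Finset.sum_eq_multiset_sum]
    conv_rhs => rw [← hs, Multiset.map_map]
    rfl
  have := congrArg (MvPolynomial.aeval fun x : s => (x : R)) (MvPolynomial.mul_esymm_eq_sum s R k)
  simpa only [map_mul, map_natCast, map_pow, map_neg, map_one, map_sum, hpsum,
    MvPolynomial.aeval_esymm_eq_multiset_esymm, hs] using this

section PowerSums

variable {R : Type*} [CommRing R] [IsDomain R] [CharZero R]

theorem Multiset.esymm_eq_of_sum_map_pow_eq {s t : Multiset R} {n : ℕ}
    (h : ∀ k, 1 ≤ k → k ≤ n → (s.map (· ^ k)).sum = (t.map (· ^ k)).sum) :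
    ∀ k ≤ n, s.esymm k = t.esymm k := by
  intro k
  induction k using Nat.strong_induction_on with
  | _ k ih =>
  intro hk
  rcases k.eq_zero_or_pos with rfl | hk0
  · simp [Multiset.esymm]
  refine mul_left_cancel₀ (Nat.cast_ne_zero.mpr hk0.ne' : (k : R) ≠ 0) ?_
  rw [s.mul_esymm_eq_sum, t.mul_esymm_eq_sum]
  congr 1
  refine Finset.sum_congr rfl fun a ha => ?_
  obtain ⟨hsum, hlt⟩ : a.1 + a.2 = k ∧ a.1 < k := by simpa using ha
  rw [ih a.1 hlt (by omega), h a.2 (by omega) (by omega)]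

theorem Multiset.eq_of_sum_map_pow_eq {s t : Multiset R} (hcard : card s = card t)
    (h : ∀ k, 1 ≤ k → k ≤ card s → (s.map (· ^ k)).sum = (t.map (· ^ k)).sum) : s = t := by
  have hesymm := esymm_eq_of_sum_map_pow_eq h
  have hprod : (s.map fun r => Polynomial.X - Polynomial.C r).prod
      = (t.map fun r => Polynomial.X - Polynomial.C r).prod := by
    rw [prod_X_sub_X_eq_sum_esymm, prod_X_sub_X_eq_sum_esymm, ← hcard]
    refine Finset.sum_congr rfl fun j hj => ?_
    rw [hesymm j (Nat.lt_succ_iff.mp (Finset.mem_range.mp hj))]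
  simpa using congrArg Polynomial.roots hprod

end PowerSums

def Finset.bezoutCoeff (S : Finset ℕ) : ℕ → ℤ :=
  (S.gcd_eq_sum_mul (Nat.cast : ℕ → ℤ)).choose

theorem Finset.sum_natCast_mul_bezoutCoeff {S : Finset ℕ} (hS : S.gcd id = 1) :
    ∑ k ∈ S, (k : ℤ) * S.bezoutCoeff k = 1 := by
  rw [bezoutCoeff, ← (S.gcd_eq_sum_mul (Nat.cast : ℕ → ℤ)).choose_spec]
  have hdvd : (S.gcd (Nat.cast : ℕ → ℤ)).natAbs ∣ 1 :=
    hS ▸ Finset.dvd_gcd fun k hk => Int.natAbs_dvd_natAbs.mpr (Finset.gcd_dvd hk)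
  have := Int.finsetGcd_nonneg (s := S) (f := (Nat.cast : ℕ → ℤ))
  rw [Nat.dvd_one] at hdvd
  omega

theorem Finset.exists_norm_eq_one_ne_one_pow_eq_one {S : Finset ℕ} (hS : S.gcd id ≠ 1) :
    ∃ ζ : ℂ, ‖ζ‖ = 1 ∧ ζ ≠ 1 ∧ ∀ k ∈ S, ζ ^ k = 1 := by
  by_cases hd : S.gcd id = 0
  · refine ⟨-1, by simp, by norm_num, fun k hk => ?_⟩
    rw [show k = 0 from Finset.gcd_eq_zero_iff.mp hd k hk, pow_zero]
  · have hζ := Complex.isPrimitiveRoot_exp _ hd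
    refine ⟨_, hζ.norm'_eq_one hd, hζ.ne_one (by omega), fun k hk => ?_⟩
    obtain ⟨m, rfl⟩ := Finset.gcd_dvd (f := id) hk
    rw [pow_mul, hζ.pow_eq_one, one_pow]

theorem Finset.prod_zpow_eq_zpow_sum₀ {ι G₀ : Type*} [CommGroupWithZero G₀] {a : G₀} (ha : a ≠ 0)
    (S : Finset ι) (f : ι → ℤ) : ∏ k ∈ S, a ^ f k = a ^ ∑ k ∈ S, f k := by
  classical
  induction S using Finset.induction_on with
  | empty => simp
  | insert i S hi ih => rw [Finset.prod_insert hi, Finset.sum_insert hi, ih, zpow_add₀ ha]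

theorem Finset.prod_pow_zpow_of_sum_eq_one {G₀ : Type*} [CommGroupWithZero G₀] {S : Finset ℕ}
    {e : ℕ → ℤ} (he : ∑ k ∈ S, (k : ℤ) * e k = 1) {a : G₀} (ha : a ≠ 0) :
    ∏ k ∈ S, (a ^ k) ^ e k = a := by
  simp_rw [← zpow_natCast, ← zpow_mul]
  rw [Finset.prod_zpow_eq_zpow_sum₀ ha, he, zpow_one]

namespace Multiset

variable {K : Type*} [Field K]

def centroid (P : Multiset K) : K := P.sum / card P

def centralMoment (P : Multiset K) (k : ℕ) : K := (P.map fun z => (z - P.centroid) ^ k).sum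

open Classical in
def nonzeroMomentDegrees (P : Multiset K) : Finset ℕ :=
  (Finset.Icc 1 (card P)).filter fun k => P.centralMoment k ≠ 0

def momentProduct (P : Multiset K) : K :=
  ∏ k ∈ P.nonzeroMomentDegrees, P.centralMoment k ^ P.nonzeroMomentDegrees.bezoutCoeff k

def asymmetryCenter (P : Multiset K) : K :=
  P.centroid + if P.nonzeroMomentDegrees.gcd id = 1 then P.momentProduct else 0

variable {P : Multiset K}

theorem mem_nonzeroMomentDegrees {k : ℕ} :
    k ∈ P.nonzeroMomentDegrees ↔ k ∈ Finset.Icc 1 (card P) ∧ P.centralMoment k ≠ 0 := by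
  classical
  exact Finset.mem_filter

theorem momentProduct_ne_zero (P : Multiset K) : P.momentProduct ≠ 0 :=
  Finset.prod_ne_zero_iff.mpr fun _ hk => zpow_ne_zero _ (mem_nonzeroMomentDegrees.mp hk).2

variable [CharZero K]

theorem centroid_map_mul_add (σ : K →+* K) (a b : K) (hP : P ≠ 0) :
    (P.map fun z => a * σ z + b).centroid = a * σ P.centroid + b := by
  have hc : (card P : K) ≠ 0 := by simpa using hP
  simp only [centroid, card_map, sum_map_add, sum_map_mul_left, map_const', sum_replicate,
    nsmul_eq_mul, map_div₀, map_natCast]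
  rw [← map_multiset_sum]
  field_simp

theorem centralMoment_map_mul_add (σ : K →+* K) (a b : K) (hP : P ≠ 0) (k : ℕ) :
    (P.map fun z => a * σ z + b).centralMoment k = a ^ k * σ (P.centralMoment k) := by
  simp only [centralMoment, centroid_map_mul_add σ a b hP, Multiset.map_map, Function.comp_def,
    map_multiset_sum, map_pow, map_sub, ← sum_map_mul_left]
  congr 1
  refine map_congr rfl fun z _ => ?_
  rw [add_sub_add_right_eq_sub, ← mul_sub, mul_pow]

theorem nonzeroMomentDegrees_map_mul_add (σ : K →+* K) {a : K} (b : K) (ha : a ≠ 0)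
    (hP : P ≠ 0) : (P.map fun z => a * σ z + b).nonzeroMomentDegrees = P.nonzeroMomentDegrees := by
  ext k
  simp [mem_nonzeroMomentDegrees, centralMoment_map_mul_add σ a b hP, ha]

theorem momentProduct_map_mul_add (σ : K →+* K) {a : K} (b : K) (ha : a ≠ 0) (hP : P ≠ 0)
    (h : P.nonzeroMomentDegrees.gcd id = 1) :
    (P.map fun z => a * σ z + b).momentProduct = a * σ P.momentProduct := by
  simp only [momentProduct, nonzeroMomentDegrees_map_mul_add σ b ha hP,
    centralMoment_map_mul_add σ a b hP, mul_zpow, Finset.prod_mul_distrib, map_prod, map_zpow₀,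
    prod_pow_zpow_of_sum_eq_one (sum_natCast_mul_bezoutCoeff h) ha]

theorem asymmetryCenter_map_mul_add (σ : K →+* K) {a : K} (b : K) (ha : a ≠ 0) (hP : P ≠ 0) :
    (P.map fun z => a * σ z + b).asymmetryCenter = a * σ P.asymmetryCenter + b := by
  simp only [asymmetryCenter, centroid_map_mul_add σ a b hP,
    nonzeroMomentDegrees_map_mul_add σ b ha hP]
  split_ifs with h
  · rw [momentProduct_map_mul_add σ b ha hP h, _root_.map_add]; ring
  · rw [add_zero, add_zero]

theorem map_rotate_centroid_eq_self {ζ : K} (hζ : ∀ k ∈ P.nonzeroMomentDegrees, ζ ^ k = 1) :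
    P.map (fun z => P.centroid + ζ * (z - P.centroid)) = P := by
  refine map_injective (sub_left_injective (b := P.centroid)) ?_
  simp only [map_map, Function.comp_def, add_sub_cancel_left]
  refine eq_of_sum_map_pow_eq (by simp) fun k hk1 hk2 => ?_
  simp only [map_map, Function.comp_def, mul_pow, sum_map_mul_left]
  change ζ ^ k * P.centralMoment k = P.centralMoment k
  by_cases hm : P.centralMoment k = 0
  · rw [hm, mul_zero]
  · rw [hζ k (mem_nonzeroMomentDegrees.mpr ⟨Finset.mem_Icc.mpr ⟨hk1, by simpa using hk2⟩, hm⟩),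
      one_mul]

end Multiset

theorem IsSimilarity.exists_eq_mul_ringHom_add {f : ℂ → ℂ} (hf : IsSimilarity f) :
    ∃ (σ : ℂ →+* ℂ) (a b : ℂ), a ≠ 0 ∧ ∀ z, f z = a * σ z + b := by
  obtain ⟨hbij, r, hr, hdist⟩ := hf
  have hr0 : (r : ℂ) ≠ 0 := mod_cast hr.ne'
  set g : ℂ → ℂ := fun z => (f z - f 0) / r with hg
  have hg_bij : g.Bijective :=
    ((Equiv.subRight (f 0)).trans (Equiv.divRight₀ _ hr0)).bijective.comp hbij
  have hg_iso : Isometry g := Isometry.of_dist_eq fun z w => by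
    rw [Complex.dist_eq, Complex.dist_eq, hg, ← sub_div, sub_sub_sub_cancel_right, norm_div,
      hdist, Complex.norm_real, Real.norm_of_nonneg hr.le, mul_div_cancel_left₀ _ hr.ne']
  let e := IsometryEquiv.toRealLinearIsometryEquivOfMapZero
    { toEquiv := Equiv.ofBijective g hg_bij, isometry_toFun := hg_iso }
    (show g 0 = 0 by simp [g])
  have he : ∀ z, e z = g z := fun _ => rfl
  obtain ⟨σ, u, hu, hσ⟩ : ∃ (σ : ℂ →+* ℂ) (u : ℂ), u ≠ 0 ∧ ∀ z, g z = u * σ z := by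
    obtain ⟨u, hu | hu⟩ := linear_isometry_complex e
    · exact ⟨RingHom.id ℂ, u, u.coe_ne_zero, fun z => by simpa [← he] using congr($hu z)⟩
    · exact ⟨starRingEnd ℂ, u, u.coe_ne_zero, fun z => by simpa [← he] using congr($hu z)⟩
  refine ⟨σ, r * u, f 0, mul_ne_zero hr0 hu, fun z => ?_⟩
  rw [mul_assoc, ← hσ, hg]
  field_simp
  ring

theorem IsPlaneIsometry.isSimilarity {f : ℂ → ℂ} (hf : IsPlaneIsometry f) : IsSimilarity f :=
  ⟨hf.1, 1, one_pos, fun z w => by rw [hf.2, one_mul]⟩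

theorem isPlaneIsometry_rotate (c : ℂ) {ζ : ℂ} (hζ : ‖ζ‖ = 1) :
    IsPlaneIsometry fun z => c + ζ * (z - c) := by
  have hζ0 : ζ ≠ 0 := by rintro rfl; simp at hζ
  refine ⟨(Equiv.addLeft c).bijective.comp
    ((Equiv.mulLeft₀ ζ hζ0).bijective.comp (Equiv.subRight c).bijective), fun z w => ?_⟩
  rw [add_sub_add_left_eq_sub, ← mul_sub, sub_sub_sub_cancel_right, norm_mul, hζ, one_mul]

section Equivariance

variable {Z : Multiset ℂ → ℂ} {P : Multiset ℂ}

theorem apply_map_eq_of_isSimilarity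
    (hZ : ∀ (σ : ℂ →+* ℂ) (a b : ℂ), a ≠ 0 → Z (P.map fun z => a * σ z + b) = a * σ (Z P) + b)
    {f : ℂ → ℂ} (hf : IsSimilarity f) : Z (P.map f) = f (Z P) := by
  obtain ⟨σ, a, b, ha, hfab⟩ := hf.exists_eq_mul_ringHom_add
  rw [show f = fun z => a * σ z + b from funext hfab]
  exact hZ σ a b ha

theorem mem_fixMultiset_of_map_eq (hZ : ∀ f, IsSimilarity f → Z (P.map f) = f (Z P)) :
    Z P ∈ FixMultiset P := fun T hT hTP => by rw [← hZ T hT.isSimilarity, hTP]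

end Equivariance

namespace Multiset

variable {P : Multiset ℂ}

theorem centroid_mem_fixMultiset (hP : P ≠ 0) : P.centroid ∈ FixMultiset P :=
  mem_fixMultiset_of_map_eq fun _ =>
    apply_map_eq_of_isSimilarity fun σ a b _ => centroid_map_mul_add σ a b hP

theorem asymmetryCenter_map_of_isSimilarity (hP : P ≠ 0) {f : ℂ → ℂ} (hf : IsSimilarity f) :
    (P.map f).asymmetryCenter = f P.asymmetryCenter :=
  apply_map_eq_of_isSimilarity (fun σ _ b ha => asymmetryCenter_map_mul_add σ b ha hP) hf

theorem fixMultiset_eq_singleton_centroid (hP : P ≠ 0)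
    (hS : P.nonzeroMomentDegrees.gcd id ≠ 1) : FixMultiset P = {P.centroid} := by
  refine Set.eq_singleton_iff_unique_mem.mpr ⟨centroid_mem_fixMultiset hP, fun x hx => ?_⟩
  obtain ⟨ζ, hζ1, hζ, hζS⟩ := Finset.exists_norm_eq_one_ne_one_pow_eq_one hS
  have hfix := hx _ (isPlaneIsometry_rotate P.centroid hζ1) (map_rotate_centroid_eq_self hζS)
  have : (ζ - 1) * (x - P.centroid) = 0 := by linear_combination hfix
  exact sub_eq_zero.mp ((mul_eq_zero.mp this).resolve_left (sub_ne_zero.mpr hζ))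

theorem not_exists_fixMultiset_eq_singleton (hP : P ≠ 0)
    (hS : P.nonzeroMomentDegrees.gcd id = 1) : ¬∃ x, FixMultiset P = {x} := by
  rintro ⟨x, hx⟩
  have hc := hx ▸ centroid_mem_fixMultiset hP
  have hX := hx ▸ mem_fixMultiset_of_map_eq fun _ => asymmetryCenter_map_of_isSimilarity hP
  rw [Set.mem_singleton_iff] at hc hX
  have : P.asymmetryCenter = P.centroid := hX.trans hc.symm
  simp [asymmetryCenter, hS, momentProduct_ne_zero] at this

end Multiset

/-- Existence of the center of rotational asymmetry for `n`-multisets: an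
`n`-multiset center `X` (defined on all `n`-multisets) such that `X P` equals
the centroid of `P` iff the fixed-point set of the symmetry group of `P`
consists of exactly one point. -/
theorem stmt7 (n : ℕ) (hn : 1 ≤ n) :
    ∃ X : Multiset ℂ → ℂ,
      (∀ P : Multiset ℂ, Multiset.card P = n →
        ∀ f : ℂ → ℂ, IsSimilarity f → X (Multiset.map f P) = f (X P)) ∧
      (∀ P : Multiset ℂ, Multiset.card P = n →
        (X P = P.sum / (n : ℂ) ↔ ∃ x : ℂ, FixMultiset P = {x})) := by
  have ne_zero {P : Multiset ℂ} (hPn : Multiset.card P = n) : P ≠ 0 := by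
    rintro rfl
    simp at hPn
    omega
  refine ⟨Multiset.asymmetryCenter, fun P hPn f hf =>
    Multiset.asymmetryCenter_map_of_isSimilarity (ne_zero hPn) hf, fun P hPn => ?_⟩
  rw [← hPn, ← Multiset.centroid]
  by_cases hS : P.nonzeroMomentDegrees.gcd id = 1
  · simp [Multiset.asymmetryCenter, hS, Multiset.momentProduct_ne_zero,
      Multiset.not_exists_fixMultiset_eq_singleton (ne_zero hPn) hS]
  · simp [Multiset.asymmetryCenter, hS,
      Multiset.fixMultiset_eq_singleton_centroid (ne_zero hPn) hS]
end
end

section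
/- (Main Theorem for n-multisets, part (ii).) Let n ≥ 1, let P be an n-multiset of points of ℂ, and let X ∈ Fix(P), i.e. X is a point fixed by every symmetry of P. Then there exists an n-multiset center Z, defined on the family of all n-multisets, such that Z(P) = X. -/
/-!
Two similarities `f`, `g` with `f(P) = g(P)` agree at `X`: the similarity `k = g⁻¹ ∘ f` maps `P`
onto itself. If `P` has two distinct points, `k` scales the (positive) sum of pairwise distances
of `P` by its ratio while leaving it unchanged, so `k` is an isometry, i.e. a symmetry of `P`,
and fixes `X`. Otherwise `P` is a single point `p` repeated; the point reflection in `p` is a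
symmetry, forcing `X = p`, and `k` fixes `p`. Hence `Z(f(P)) = f(X)` is well defined on the
similarity class of `P`. Elsewhere `Z` is the centroid, which commutes with similarities since
they are real-affine (Mazur–Ulam applied to `r⁻¹ • f`).
-/

noncomputable section

section PairwiseDist

variable {E : Type*} [NormedAddCommGroup E]

def pairwiseDistSum (Q : Multiset E) : ℝ :=
  (Q.map fun p => (Q.map fun q => ‖p - q‖).sum).sum

theorem pairwiseDistSum_map {k : E → E} {r : ℝ} (hk : ∀ z w, ‖k z - k w‖ = r * ‖z - w‖)
    (Q : Multiset E) : pairwiseDistSum (Q.map k) = r * pairwiseDistSum Q := by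
  simp only [pairwiseDistSum, Multiset.map_map, Function.comp_def, hk, Multiset.sum_map_mul_left]

theorem pairwiseDistSum_pos {Q : Multiset E} {a b : E} (ha : a ∈ Q) (hb : b ∈ Q) (hab : a ≠ b) :
    0 < pairwiseDistSum Q := by
  have h_inner : ‖a - b‖ ≤ (Q.map fun q => ‖a - q‖).sum :=
    Multiset.single_le_sum (by simp) _ (Multiset.mem_map_of_mem _ hb)
  have h_outer : (Q.map fun q => ‖a - q‖).sum ≤ pairwiseDistSum Q :=
    Multiset.single_le_sum (by simp [Multiset.sum_nonneg]) _ (Multiset.mem_map_of_mem _ ha)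
  have : 0 < ‖a - b‖ := norm_pos_iff.2 (sub_ne_zero.2 hab)
  linarith

theorem ratio_eq_one_of_map_eq_self {k : E → E} {r : ℝ} (hk : ∀ z w, ‖k z - k w‖ = r * ‖z - w‖)
    {P : Multiset E} (hP : P.map k = P) {a b : E} (ha : a ∈ P) (hb : b ∈ P) (hab : a ≠ b) :
    r = 1 := by
  have h_scale : pairwiseDistSum P = r * pairwiseDistSum P := by
    conv_lhs => rw [← hP]
    exact pairwiseDistSum_map hk P
  have h_pos := pairwiseDistSum_pos ha hb hab
  nlinarith

end PairwiseDist

theorem ne_zero_of_mem_fixMultiset {P : Multiset ℂ} {X : ℂ} (hX : X ∈ FixMultiset P) :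
    P ≠ 0 := by
  rintro rfl
  have h_transl : IsPlaneIsometry (· + 1) :=
    ⟨(Equiv.addRight 1).bijective, fun z w => by rw [add_sub_add_right_eq_sub]⟩
  simpa using hX _ h_transl (Multiset.map_zero _)

theorem eq_of_mem_fixMultiset_of_forall_eq {P : Multiset ℂ} {X p : ℂ} (hX : X ∈ FixMultiset P)
    (hP : ∀ q ∈ P, q = p) : X = p := by
  have h_refl : IsPlaneIsometry (2 * p - ·) :=
    ⟨Function.Involutive.bijective fun z => by ring, fun z w => by
      rw [sub_sub_sub_cancel_left, norm_sub_rev]⟩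
  have h_map : P.map (2 * p - ·) = P := by
    conv_rhs => rw [← Multiset.map_id P]
    exact Multiset.map_congr rfl fun q hq => by rw [hP q hq, id]; ring
  linear_combination (-1 / 2 : ℂ) * hX _ h_refl h_map

namespace IsSimilarity

variable {f g : ℂ → ℂ}

theorem comp (hf : IsSimilarity f) (hg : IsSimilarity g) : IsSimilarity (f ∘ g) := by
  obtain ⟨hf_bij, r, hr, hf_dist⟩ := hf
  obtain ⟨hg_bij, s, hs, hg_dist⟩ := hg
  exact ⟨hf_bij.comp hg_bij, r * s, mul_pos hr hs, fun z w => by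
    simp only [Function.comp_apply, hf_dist, hg_dist, mul_assoc]⟩

theorem exists_leftInverse (hf : IsSimilarity f) :
    ∃ g, IsSimilarity g ∧ Function.LeftInverse g f := by
  obtain ⟨hf_bij, r, hr, hf_dist⟩ := hf
  let e := Equiv.ofBijective f hf_bij
  refine ⟨e.symm, ⟨e.symm.bijective, r⁻¹, inv_pos.2 hr, fun z w => ?_⟩, e.symm_apply_apply⟩
  have := hf_dist (e.symm z) (e.symm w)
  rw [show f (e.symm z) = z from e.apply_symm_apply z,
    show f (e.symm w) = w from e.apply_symm_apply w] at this
  rw [this, inv_mul_cancel_left₀ hr.ne']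

theorem exists_affineMap (hf : IsSimilarity f) : ∃ A : ℂ →ᵃ[ℝ] ℂ, ⇑A = f := by
  obtain ⟨hf_bij, r, hr, hf_dist⟩ := hf
  have hu_bij : Function.Bijective (r⁻¹ • f) :=
    (Equiv.ofBijective f hf_bij |>.trans (Equiv.smulRight (inv_ne_zero hr.ne'))).bijective
  have hu_iso : Isometry (r⁻¹ • f) := Isometry.of_dist_eq fun z w => by
    rw [dist_eq_norm, dist_eq_norm, Pi.smul_apply, Pi.smul_apply, ← smul_sub, norm_smul,
      hf_dist, Real.norm_of_nonneg (inv_nonneg.2 hr.le), inv_mul_cancel_left₀ hr.ne']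
  let u : ℂ ≃ᵢ ℂ := ⟨Equiv.ofBijective _ hu_bij, hu_iso⟩
  refine ⟨r • u.toRealAffineIsometryEquiv.toAffineMap, ?_⟩
  ext z
  exact smul_inv_smul₀ hr.ne' (f z)

theorem apply_eq_self_of_map_eq_self {P : Multiset ℂ} {X : ℂ}
    (hX : X ∈ FixMultiset P) {k : ℂ → ℂ} (hk : IsSimilarity k) (hP : P.map k = P) : k X = X := by
  obtain ⟨hk_bij, r, -, hk_dist⟩ := hk
  by_cases h_two : ∃ a ∈ P, ∃ b ∈ P, a ≠ b
  · obtain ⟨a, ha, b, hb, hab⟩ := h_two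
    have hr : r = 1 := ratio_eq_one_of_map_eq_self hk_dist hP ha hb hab
    exact hX k ⟨hk_bij, fun z w => by rw [hk_dist, hr, one_mul]⟩ hP
  · push Not at h_two
    obtain ⟨p, hp⟩ := Multiset.exists_mem_of_ne_zero (ne_zero_of_mem_fixMultiset hX)
    have h_const : ∀ q ∈ P, q = p := fun q hq => h_two q hq p hp
    rw [eq_of_mem_fixMultiset_of_forall_eq hX h_const]
    exact h_const _ (hP ▸ Multiset.mem_map_of_mem k hp)

theorem apply_eq_of_map_eq_map {P : Multiset ℂ} {X : ℂ} (hX : X ∈ FixMultiset P)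
    {f g : ℂ → ℂ} (hf : IsSimilarity f) (hg : IsSimilarity g) (h : P.map f = P.map g) :
    f X = g X := by
  obtain ⟨g', hg', hg'g⟩ := hg.exists_leftInverse
  have h_self : P.map (g' ∘ f) = P := by
    rw [← Multiset.map_map, h, Multiset.map_map, hg'g.comp_eq_id, Multiset.map_id]
  apply hg'.1.1
  rw [hg'g]
  exact (hg'.comp hf).apply_eq_self_of_map_eq_self hX h_self

end IsSimilarity

section Centroid

variable {E F : Type*} [AddCommGroup E] [Module ℝ E] [AddCommGroup F] [Module ℝ F]

def multisetCentroid (Q : Multiset E) : E :=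
  (Q.card : ℝ)⁻¹ • Q.sum

theorem AffineMap.multisetCentroid_map (A : E →ᵃ[ℝ] F) {Q : Multiset E} (hQ : Q ≠ 0) :
    multisetCentroid (Q.map A) = A (multisetCentroid Q) := by
  have hcard : (Q.card : ℝ) ≠ 0 := by simpa using hQ
  have hsum : (Q.map A).sum = A.linear Q.sum + Q.card • A 0 := by
    rw [A.decomp]
    simp [Multiset.sum_map_add, map_multiset_sum]
  rw [multisetCentroid, multisetCentroid, Multiset.card_map, hsum, A.decomp]
  simp [smul_add, ← Nat.cast_smul_eq_nsmul ℝ, smul_smul, inv_mul_cancel₀ hcard]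

end Centroid

def IsSimilarMultiset (P Q : Multiset ℂ) : Prop :=
  ∃ f, IsSimilarity f ∧ P.map f = Q

theorem IsSimilarMultiset.map_right_iff {P Q : Multiset ℂ} {f : ℂ → ℂ} (hf : IsSimilarity f) :
    IsSimilarMultiset P (Q.map f) ↔ IsSimilarMultiset P Q := by
  constructor
  · rintro ⟨g, hg, hPg⟩
    obtain ⟨f', hf', hf'f⟩ := hf.exists_leftInverse
    refine ⟨f' ∘ g, hf'.comp hg, ?_⟩
    rw [← Multiset.map_map, hPg, Multiset.map_map, hf'f.comp_eq_id, Multiset.map_id]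
  · rintro ⟨g, hg, rfl⟩
    exact ⟨f ∘ g, hf.comp hg, (Multiset.map_map f g P).symm⟩

open Classical in
def extendCenter (P : Multiset ℂ) (X : ℂ) (Q : Multiset ℂ) : ℂ :=
  if h : IsSimilarMultiset P Q then h.choose X else multisetCentroid Q

section ExtendCenter

variable {P : Multiset ℂ} {X : ℂ}

theorem extendCenter_of_map_eq (hX : X ∈ FixMultiset P) {g : ℂ → ℂ} (hg : IsSimilarity g)
    {Q : Multiset ℂ} (hQ : P.map g = Q) : extendCenter P X Q = g X := by
  have h : IsSimilarMultiset P Q := ⟨g, hg, hQ⟩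
  rw [extendCenter, dif_pos h]
  exact h.choose_spec.1.apply_eq_of_map_eq_map hX hg (h.choose_spec.2.trans hQ.symm)

theorem extendCenter_self (hX : X ∈ FixMultiset P) : extendCenter P X P = X :=
  extendCenter_of_map_eq hX ⟨Function.bijective_id, 1, one_pos, fun z w => by simp⟩
    (Multiset.map_id P)

theorem extendCenter_map (hX : X ∈ FixMultiset P) {Q : Multiset ℂ} (hQ : Q ≠ 0) {f : ℂ → ℂ}
    (hf : IsSimilarity f) : extendCenter P X (Q.map f) = f (extendCenter P X Q) := by
  by_cases h : IsSimilarMultiset P Q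
  · obtain ⟨g, hg, rfl⟩ := h
    rw [extendCenter_of_map_eq hX hg rfl,
      extendCenter_of_map_eq hX (hf.comp hg) (Multiset.map_map f g P).symm, Function.comp_apply]
  · obtain ⟨A, rfl⟩ := hf.exists_affineMap
    rw [extendCenter, extendCenter, dif_neg h,
      dif_neg ((IsSimilarMultiset.map_right_iff hf).not.2 h)]
    exact A.multisetCentroid_map hQ

end ExtendCenter

theorem stmt10_general (n : ℕ) (hn : 1 ≤ n) (P : Multiset ℂ)
    (X : ℂ) (hX : X ∈ FixMultiset P) :
    ∃ Z : Multiset ℂ → ℂ,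
      (∀ Q : Multiset ℂ, Multiset.card Q = n →
        ∀ f : ℂ → ℂ, IsSimilarity f → Z (Multiset.map f Q) = f (Z Q)) ∧
      Z P = X :=
  ⟨extendCenter P X, fun _ hQ _ hf =>
    extendCenter_map hX (Multiset.card_pos.1 (hQ ▸ hn)) hf, extendCenter_self hX⟩

/-- Main theorem for `n`-multisets, part (ii): every point `X` fixed by the
group of symmetries of `P` is the value at `P` of some `n`-multiset center `Z`
defined on all `n`-multisets. -/
theorem stmt10 (n : ℕ) (hn : 1 ≤ n) (P : Multiset ℂ) (hP : Multiset.card P = n)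
    (X : ℂ) (hX : X ∈ FixMultiset P) :
    ∃ Z : Multiset ℂ → ℂ,
      (∀ Q : Multiset ℂ, Multiset.card Q = n →
        ∀ f : ℂ → ℂ, IsSimilarity f → Z (Multiset.map f Q) = f (Z Q)) ∧
      Z P = X :=
  stmt10_general n hn P X hX
end
end
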